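/- arXiv:1508.03105 — 6 statements merged into one kernel-verified Lean document; each statement's English description precedes it below -/
import Mathlib

section
/- Let α > 0, let a < b be real numbers, let u : [a,b] → ℝ be continuous, and let B_a, B_b be arbitrary real constants. Define w(x) = (α/2) ∫_a^b e^{−α|x−y|} u(y) dy + B_a e^{−α(x−a)} + B_b e^{−α(b−x)}. Then w is twice continuously differentiable on the open interval (a,b) and satisfies the modified Helmholtz equation w(x) − w''(x)/α² = u(x) for all x ∈ (a,b). -/
/-!
Splitting the integral at `x` writes the Green's potential as `(α/2) (P - R)`, where
`P x = ∫_a^x e^{-α(x-y)} u y` and `R x = ∫_b^x e^{α(x-y)} u y` solve the first-order equations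
`P' + α P = u` and `R' - α R = u` given by the factorisation `α² - D² = (α - D)(α + D)`.
Differentiating twice then gives `w'' = α² (w - u)`, the homogeneous terms contributing
`α²` times themselves.
-/

open Real Set intervalIntegral

-- Duhamel's formula for the solution of `y' + c y = u` with `y p = 0`.
noncomputable def duhamel (c p : ℝ) (u : ℝ → ℝ) (x : ℝ) : ℝ :=
  ∫ y in p..x, exp (-c * (x - y)) * u y

lemma duhamel_eq (c p : ℝ) (u : ℝ → ℝ) (x : ℝ) :
    duhamel c p u x = exp (-c * x) * ∫ y in p..x, exp (c * y) * u y := by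
  rw [duhamel, ← integral_const_mul]
  refine integral_congr fun y _ => ?_
  rw [← mul_assoc, ← exp_add]
  ring_nf

lemma hasDerivAt_duhamel {c p x : ℝ} {u : ℝ → ℝ} {s : Set ℝ} (hu : ContinuousOn u s)
    (hps : uIcc p x ⊆ s) (hs : s ∈ nhds x) :
    HasDerivAt (duhamel c p u) (u x - c * duhamel c p u x) x := by
  have hcont : ContinuousOn (fun y => exp (c * y) * u y) s := by fun_prop
  have hF : HasDerivAt (fun t => ∫ y in p..t, exp (c * y) * u y) (exp (c * x) * u x) x :=
    integral_hasDerivAt_right ((hcont.mono hps).intervalIntegrable)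
      (hcont.mono interior_subset |>.stronglyMeasurableAtFilter isOpen_interior x
        (mem_interior_iff_mem_nhds.mpr hs))
      (hcont.continuousAt hs)
  have hE : HasDerivAt (fun t => exp (-c * t)) (exp (-c * x) * -c) x := by
    simpa using ((hasDerivAt_id x).const_mul (-c)).exp
  rw [show duhamel c p u = _ from funext (duhamel_eq c p u)]
  refine (hE.mul hF).congr_deriv ?_
  have : exp (-c * x) * exp (c * x) = 1 := by rw [← exp_add]; simp
  linear_combination u x * this

lemma integral_exp_neg_abs_mul_eq_duhamel_sub {α a b x : ℝ} {u : ℝ → ℝ}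
    (hu : IntervalIntegrable u MeasureTheory.volume a b) (hx : x ∈ Icc a b) :
    ∫ y in a..b, exp (-α * |x - y|) * u y = duhamel α a u x - duhamel (-α) b u x := by
  have hk : ∀ {p q}, IntervalIntegrable u MeasureTheory.volume p q →
      IntervalIntegrable (fun y => exp (-α * |x - y|) * u y) MeasureTheory.volume p q :=
    fun h => h.continuousOn_mul (by fun_prop)
  rw [← integral_add_adjacent_intervals (hk (hu.mono_set ?_)) (hk (hu.mono_set ?_)),
    duhamel, duhamel, integral_symm x b, sub_neg_eq_add]
  · congr 1 <;> refine integral_congr fun y hy => ?_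
    · rw [uIcc_of_le hx.1] at hy
      rw [abs_of_nonneg (by linarith [hy.2])]
    · rw [uIcc_of_le hx.2] at hy
      rw [abs_of_nonpos (by linarith [hy.1])]
      ring_nf
  · exact uIcc_subset_uIcc left_mem_uIcc (Icc_subset_uIcc hx)
  · exact uIcc_subset_uIcc (Icc_subset_uIcc hx) right_mem_uIcc

section SecondDerivative

variable {𝕜 F : Type*} [NontriviallyNormedField 𝕜] [NormedAddCommGroup F] [NormedSpace 𝕜 F]
  {f f' f'' : 𝕜 → F} {s : Set 𝕜}

lemma contDiffOn_two_of_hasDerivAt (hs : IsOpen s) (hf : ∀ x ∈ s, HasDerivAt f (f' x) x)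
    (hf' : ∀ x ∈ s, HasDerivAt f' (f'' x) x) (hf'' : ContinuousOn f'' s) :
    ContDiffOn 𝕜 2 f s := by
  rw [show (2 : WithTop ℕ∞) = 1 + 1 from rfl, contDiffOn_succ_iff_deriv_of_isOpen hs]
  refine ⟨fun x hx => (hf x hx).differentiableAt.differentiableWithinAt, by simp,
    ContDiffOn.congr ?_ fun x hx => (hf x hx).deriv⟩
  rw [show (1 : WithTop ℕ∞) = 0 + 1 from rfl, contDiffOn_succ_iff_deriv_of_isOpen hs,
    contDiffOn_zero]
  exact ⟨fun x hx => (hf' x hx).differentiableAt.differentiableWithinAt, by simp,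
    hf''.congr fun x hx => (hf' x hx).deriv⟩

lemma deriv_deriv_eq_of_hasDerivAt (hs : IsOpen s) (hf : ∀ x ∈ s, HasDerivAt f (f' x) x)
    (hf' : ∀ x ∈ s, HasDerivAt f' (f'' x) x) {x : 𝕜} (hx : x ∈ s) :
    deriv (deriv f) x = f'' x :=
  ((hf' x hx).congr_of_eventuallyEq
    (Filter.eventuallyEq_of_mem (hs.mem_nhds hx) fun y hy => (hf y hy).deriv)).deriv

end SecondDerivative

/-- The modified Helmholtz inverse `w = L⁻¹[u]`, built from the Green's function
`(α/2) e^{-α|x-y|}` plus homogeneous solutions, is twice continuously differentiable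
on `(a,b)` and satisfies `w - w''/α² = u` there. -/
theorem greens_function_inverts_modified_helmholtz
    (α a b : ℝ) (hα : 0 < α) (hab : a < b)
    (u : ℝ → ℝ) (hu : ContinuousOn u (Set.Icc a b))
    (Ba Bb : ℝ) (w : ℝ → ℝ)
    (hw : ∀ x : ℝ, w x =
      (α / 2) * (∫ y in a..b, Real.exp (-α * |x - y|) * u y)
        + Ba * Real.exp (-α * (x - a)) + Bb * Real.exp (-α * (b - x))) :
    ContDiffOn ℝ 2 w (Set.Ioo a b) ∧
      ∀ x ∈ Set.Ioo a b, w x - deriv (deriv w) x / α ^ 2 = u x := by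
  set P := duhamel α a u
  set R := duhamel (-α) b u
  set E₁ := fun t => exp (-α * (t - a))
  set E₂ := fun t => exp (-α * (b - t))
  have hE₁ (x : ℝ) : HasDerivAt E₁ (-α * E₁ x) x :=
    (((hasDerivAt_id' x).sub_const a).const_mul (-α)).exp.congr_deriv (by ring)
  have hE₂ (x : ℝ) : HasDerivAt E₂ (α * E₂ x) x :=
    (((hasDerivAt_id' x).const_sub b).const_mul (-α)).exp.congr_deriv (by ring)
  have hwP : EqOn w (fun t => α / 2 * (P t - R t) + Ba * E₁ t + Bb * E₂ t) (Icc a b) :=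
    fun x hx => by
      rw [hw, integral_exp_neg_abs_mul_eq_duhamel_sub (hu.intervalIntegrable_of_Icc hab.le) hx]
  have hP (x : ℝ) (hx : x ∈ Ioo a b) : HasDerivAt P (u x - α * P x) x :=
    hasDerivAt_duhamel hu (uIcc_subset_Icc (left_mem_Icc.mpr hab.le) (Ioo_subset_Icc_self hx))
      (Icc_mem_nhds hx.1 hx.2)
  have hR (x : ℝ) (hx : x ∈ Ioo a b) : HasDerivAt R (u x + α * R x) x := by
    simpa using hasDerivAt_duhamel (c := -α) hu
      (uIcc_subset_Icc (right_mem_Icc.mpr hab.le) (Ioo_subset_Icc_self hx))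
      (Icc_mem_nhds hx.1 hx.2)
  set w' := fun t => -(α ^ 2 / 2) * (P t + R t) - α * Ba * E₁ t + α * Bb * E₂ t
  have hw₁ (x : ℝ) (hx : x ∈ Ioo a b) : HasDerivAt w (w' x) x := by
    refine ((((hP x hx).sub (hR x hx)).const_mul (α / 2)).add ((hE₁ x).const_mul Ba) |>.add
      ((hE₂ x).const_mul Bb)).congr_of_eventuallyEq
      (Filter.eventuallyEq_of_mem (Icc_mem_nhds hx.1 hx.2) hwP) |>.congr_deriv ?_
    ring
  have hw₂ (x : ℝ) (hx : x ∈ Ioo a b) : HasDerivAt w' (α ^ 2 * (w x - u x)) x := by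
    refine ((((hP x hx).add (hR x hx)).const_mul (-(α ^ 2 / 2))).sub
      ((hE₁ x).const_mul (α * Ba)) |>.add ((hE₂ x).const_mul (α * Bb))).congr_deriv ?_
    rw [hwP (Ioo_subset_Icc_self hx)]
    ring
  have hw₂c : ContinuousOn (fun x => α ^ 2 * (w x - u x)) (Ioo a b) :=
    continuousOn_const.mul ((HasDerivAt.continuousOn hw₁).sub (hu.mono Ioo_subset_Icc_self))
  refine ⟨contDiffOn_two_of_hasDerivAt isOpen_Ioo hw₁ hw₂ hw₂c, fun x hx => ?_⟩
  rw [deriv_deriv_eq_of_hasDerivAt isOpen_Ioo hw₁ hw₂ hx]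
  field_simp
  ring
end

section
/- Let α > 0, let a < b, let u : [a,b] → ℝ be continuous, and set μ = e^{−α(b−a)}, I(x) = (α/2) ∫_a^b e^{−α|x−y|} u(y) dy. If the homogeneous coefficients are chosen as B_a = I(b)/(1−μ) and B_b = I(a)/(1−μ), then the function w(x) = I(x) + B_a e^{−α(x−a)} + B_b e^{−α(b−x)} satisfies the periodic boundary conditions w(a) = w(b) and w'(a) = w'(b). -/
open Real Set intervalIntegral

/-!
On `[a, b]` the kernel `e^{-α|x-y|}` splits as `e^{-αx} e^{αy}` (for `y ≤ x`) and
`e^{αx} e^{-αy}` (for `y ≥ x`), so `I` is a combination of exponentials and primitives of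
`u`; to the left of `a` it is a pure multiple of `e^{αx}`. Both pieces have derivative
`α I(a)` at `a`, hence `I'(a) = α I(a)`, and reflecting `y ↦ a + b - y` gives
`I'(b) = -α I(b)`. With `μ = e^{-α(b-a)} < 1` the boundary values of `w` and `w'` are then
linear in `B_a, B_b`, and the stated coefficients make them agree.
-/

noncomputable def helmholtzIntegral (α a b : ℝ) (u : ℝ → ℝ) (x : ℝ) : ℝ :=
  (α / 2) * ∫ y in a..b, exp (-α * |x - y|) * u y

theorem exp_neg_mul_abs_sub_of_le {α x y : ℝ} (h : x ≤ y) :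
    exp (-α * |x - y|) = exp (α * x) * exp (-α * y) := by
  rw [abs_of_nonpos (sub_nonpos.2 h), ← exp_add]
  ring_nf

theorem exp_neg_mul_abs_sub_of_ge {α x y : ℝ} (h : y ≤ x) :
    exp (-α * |x - y|) = exp (-α * x) * exp (α * y) := by
  rw [abs_of_nonneg (sub_nonneg.2 h), ← exp_add]
  ring_nf

theorem hasDerivAt_of_eqOn_Iic_of_eqOn_Icc {f g h : ℝ → ℝ} {a b f' : ℝ} (hab : a < b)
    (hg : HasDerivAt g f' a) (hh : HasDerivAt h f' a)
    (hfg : EqOn f g (Iic a)) (hfh : EqOn f h (Icc a b)) : HasDerivAt f f' a := by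
  have hleft : HasDerivWithinAt f f' (Iic a) a :=
    hg.hasDerivWithinAt.congr hfg (hfg self_mem_Iic)
  have hright : HasDerivWithinAt f f' (Ici a) a :=
    hh.hasDerivWithinAt.congr_of_eventuallyEq
      (Filter.eventuallyEq_of_mem (Icc_mem_nhdsGE hab) hfh) (hfh (left_mem_Icc.2 hab.le))
  simpa only [Iic_union_Ici, hasDerivWithinAt_univ] using hleft.union hright

theorem hasDerivAt_exp_const_mul (c x : ℝ) :
    HasDerivAt (fun x => exp (c * x)) (exp (c * x) * c) x := by
  simpa using ((hasDerivAt_id x).const_mul c).exp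

namespace helmholtzIntegral

variable {α a b : ℝ} {u : ℝ → ℝ}

theorem congr_of_eqOn {v : ℝ → ℝ} (h : EqOn u v (uIcc a b)) :
    helmholtzIntegral α a b u = helmholtzIntegral α a b v := by
  funext x
  unfold helmholtzIntegral
  rw [integral_congr fun y hy => congrArg _ (h hy)]

theorem exists_continuous_eq (hab : a ≤ b) (hu : ContinuousOn u (Icc a b)) :
    ∃ v, Continuous v ∧ helmholtzIntegral α a b v = helmholtzIntegral α a b u := by
  refine ⟨fun y => u (projIcc a b hab y), ?_, congr_of_eqOn fun y hy => ?_⟩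
  · exact hu.comp_continuous (continuous_subtype_val.comp continuous_projIcc)
      fun y => (projIcc a b hab y).2
  · rw [uIcc_of_le hab] at hy
    simp only [projIcc_of_mem hab hy]

theorem comp_sub_left (x : ℝ) :
    helmholtzIntegral α a b (fun y => u (a + b - y)) x = helmholtzIntegral α a b u (a + b - x) := by
  unfold helmholtzIntegral
  have h := integral_comp_sub_left (a := a) (b := b) (fun y => exp (-α * |a + b - x - y|) * u y) (a + b)
  rw [add_sub_cancel_right, add_sub_cancel_left] at h
  rw [← h]
  congr 2 with y
  rw [sub_sub_sub_cancel_left, abs_sub_comm]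

theorem eq_of_le (hab : a ≤ b) {x : ℝ} (hx : x ≤ a) :
    helmholtzIntegral α a b u x = (α / 2) * (exp (α * x) * ∫ y in a..b, exp (-α * y) * u y) := by
  unfold helmholtzIntegral
  rw [← integral_const_mul (exp (α * x))]
  refine congrArg _ (integral_congr fun y hy => ?_)
  rw [uIcc_of_le hab] at hy
  simp only [exp_neg_mul_abs_sub_of_le (hx.trans hy.1), mul_assoc]

theorem eq_of_mem_Icc (hu : Continuous u) {x : ℝ} (hx : x ∈ Icc a b) :
    helmholtzIntegral α a b u x = (α / 2) * (exp (-α * x) * (∫ y in a..x, exp (α * y) * u y)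
      + exp (α * x) * ∫ y in x..b, exp (-α * y) * u y) := by
  have hint : ∀ c d, IntervalIntegrable (fun y => exp (-α * |x - y|) * u y) MeasureTheory.volume c d :=
    fun c d => (by fun_prop : Continuous _).intervalIntegrable c d
  unfold helmholtzIntegral
  rw [← integral_add_adjacent_intervals (hint a x) (hint x b), ← integral_const_mul,
    ← integral_const_mul]
  congr 2
  · refine integral_congr fun y hy => ?_
    rw [uIcc_of_le hx.1] at hy
    simp only [exp_neg_mul_abs_sub_of_ge hy.2, mul_assoc]
  · refine integral_congr fun y hy => ?_
    rw [uIcc_of_le hx.2] at hy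
    simp only [exp_neg_mul_abs_sub_of_le hy.1, mul_assoc]

theorem hasDerivAt_left (hab : a < b) (hu : Continuous u) :
    HasDerivAt (helmholtzIntegral α a b u) (α * helmholtzIntegral α a b u a) a := by
  set K := ∫ y in a..b, exp (-α * y) * u y
  have hIa : helmholtzIntegral α a b u a = (α / 2) * (exp (α * a) * K) := eq_of_le hab.le le_rfl
  have hJ : HasDerivAt (fun x => ∫ y in a..x, exp (α * y) * u y) (exp (α * a) * u a) a :=
    ((by fun_prop : Continuous fun y => exp (α * y) * u y).integral_hasStrictDerivAt a a).hasDerivAt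
  have hK : HasDerivAt (fun x => ∫ y in x..b, exp (-α * y) * u y) (-(exp (-α * a) * u a)) a :=
    have hc : Continuous fun y => exp (-α * y) * u y := by fun_prop
    integral_hasDerivAt_left (hc.intervalIntegrable a b) (hc.stronglyMeasurableAtFilter _ _)
      hc.continuousAt
  refine hasDerivAt_of_eqOn_Iic_of_eqOn_Icc hab
    ((((hasDerivAt_exp_const_mul α a).mul_const K).const_mul (α / 2)).congr_deriv ?_)
    (((((hasDerivAt_exp_const_mul (-α) a).mul hJ).add
      ((hasDerivAt_exp_const_mul α a).mul hK)).const_mul (α / 2)).congr_deriv ?_)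
    (fun x hx => eq_of_le hab.le hx) (fun x hx => eq_of_mem_Icc hu hx)
  · rw [hIa]; ring
  · rw [hIa, integral_same]; ring

theorem hasDerivAt_right (hab : a < b) (hu : Continuous u) :
    HasDerivAt (helmholtzIntegral α a b u) (-α * helmholtzIntegral α a b u b) b := by
  have hrefl := hasDerivAt_left (α := α) hab (u := fun y => u (a + b - y)) (by fun_prop)
  have h := hrefl.comp_of_eq b ((hasDerivAt_id b).const_sub (a + b)) (by simp)
  have hfun : helmholtzIntegral α a b (fun y => u (a + b - y)) ∘ (fun x => a + b - id x)
      = helmholtzIntegral α a b u := by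
    funext x
    simp only [Function.comp, id, comp_sub_left, sub_sub_cancel]
  rw [hfun, comp_sub_left, add_sub_cancel_left] at h
  exact h.congr_deriv (by ring)

end helmholtzIntegral

/-- With the homogeneous coefficients `B_a = I(b)/(1-μ)`, `B_b = I(a)/(1-μ)`,
`μ = e^{-α(b-a)}`, the modified Helmholtz inverse
`w(x) = I(x) + B_a e^{-α(x-a)} + B_b e^{-α(b-x)}`
satisfies the periodic boundary conditions `w(a) = w(b)` and `w'(a) = w'(b)`. -/
theorem periodic_boundary_conditions
    (α a b : ℝ) (hα : 0 < α) (hab : a < b)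
    (u : ℝ → ℝ) (hu : ContinuousOn u (Set.Icc a b))
    (I : ℝ → ℝ)
    (hI : ∀ x : ℝ, I x = (α / 2) * ∫ y in a..b, Real.exp (-α * |x - y|) * u y)
    (μ Ba Bb : ℝ) (hμ : μ = Real.exp (-α * (b - a)))
    (hBa : Ba = I b / (1 - μ)) (hBb : Bb = I a / (1 - μ))
    (w : ℝ → ℝ)
    (hw : ∀ x : ℝ, w x = I x + Ba * Real.exp (-α * (x - a)) + Bb * Real.exp (-α * (b - x))) :
    w a = w b ∧ deriv w a = deriv w b := by
  obtain ⟨v, hv, hIv⟩ := helmholtzIntegral.exists_continuous_eq (α := α) hab.le hu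
  have hI_eq : I = helmholtzIntegral α a b v := (funext hI).trans hIv.symm
  have hIa := hI_eq ▸ helmholtzIntegral.hasDerivAt_left hab hv
  have hIb := hI_eq ▸ helmholtzIntegral.hasDerivAt_right hab hv
  have hw_deriv : ∀ x I', HasDerivAt I I' x →
      HasDerivAt w (I' - α * Ba * exp (-α * (x - a)) + α * Bb * exp (-α * (b - x))) x := by
    intro x I' hI'
    rw [funext hw]
    refine ((hI'.add (((((hasDerivAt_id x).sub_const a).const_mul (-α)).exp).const_mul Ba)).add
      (((((hasDerivAt_id x).const_sub b).const_mul (-α)).exp).const_mul Bb)).congr_deriv ?_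
    simp only [id]
    ring
  have hμ_lt_one : μ < 1 := by
    rw [hμ, exp_lt_one_iff]
    nlinarith
  have hμ_ne : 1 - μ ≠ 0 := by linarith
  constructor
  · rw [hw, hw, hBa, hBb]
    simp only [sub_self, mul_zero, exp_zero, ← hμ]
    field_simp
    ring
  · rw [(hw_deriv a _ hIa).deriv, (hw_deriv b _ hIb).deriv, hBa, hBb]
    simp only [sub_self, mul_zero, exp_zero, ← hμ]
    field_simp
    ring
end

section
/- For every real x and every real t with |t| < 1, the generating function identity for the Laguerre polynomials holds: ∑_{n=0}^{∞} L_n(x) t^n = (1−t)^{−1} e^{−x t/(1−t)}, where the series converges absolutely. -/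
open Real Finset

/-!
Writing `L_n(x) = ∑_k C(n,k) a_k` with `a_k = (-x)^k / k!`, the series `∑_n L_n(x) tⁿ` is the sum,
row by row, of the double series with entries `C(n,k) a_k tⁿ` (`k ≤ n`). Summed column by column
instead, `∑_{n ≥ k} C(n,k) tⁿ = t^k / (1-t)^(k+1)` turns it into
`(1-t)⁻¹ ∑_k a_k (t/(1-t))^k = (1-t)⁻¹ e^{-xt/(1-t)}`. The same computation for `|a_k|` and `|t|`
shows that the double series converges absolutely, which justifies the interchange.
-/

noncomputable def laguerre (n : ℕ) (x : ℝ) : ℝ :=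
  ∑ k ∈ Finset.range (n + 1), (-1) ^ k * (n.choose k : ℝ) * x ^ k / (Nat.factorial k : ℝ)

section BinomialTransform

variable {𝕜 : Type*} [NormedField 𝕜]

def binomialTransform (a : ℕ → 𝕜) (n : ℕ) : 𝕜 :=
  ∑ k ∈ range (n + 1), (n.choose k : 𝕜) * a k

def binomialTransformTerm (a : ℕ → 𝕜) (t : 𝕜) (p : ℕ × ℕ) : 𝕜 :=
  if p.1 ≤ p.2 then (p.2.choose p.1 : 𝕜) * a p.1 * t ^ p.2 else 0

lemma binomialTransformTerm_of_lt (a : ℕ → 𝕜) (t : 𝕜) {k n : ℕ} (h : n < k) :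
    binomialTransformTerm a t (k, n) = 0 :=
  if_neg h.not_ge

lemma norm_natCast_le_self (n : ℕ) : ‖(n : 𝕜)‖ ≤ n :=
  (Nat.norm_cast_le n).trans_eq (by rw [norm_one, mul_one])

lemma norm_binomialTransform_le (a : ℕ → 𝕜) (n : ℕ) :
    ‖binomialTransform a n‖ ≤ binomialTransform (‖a ·‖) n := by
  refine (norm_sum_le _ _).trans (sum_le_sum fun k _ => ?_)
  rw [norm_mul]
  gcongr
  exact norm_natCast_le_self _

lemma norm_binomialTransformTerm_le (a : ℕ → 𝕜) (t : 𝕜) (p : ℕ × ℕ) :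
    ‖binomialTransformTerm a t p‖ ≤ binomialTransformTerm (‖a ·‖) ‖t‖ p := by
  unfold binomialTransformTerm
  split_ifs
  · rw [norm_mul, norm_mul, norm_pow]
    gcongr
    exact norm_natCast_le_self _
  · rw [norm_zero]

lemma tsum_binomialTransformTerm_row (a : ℕ → 𝕜) (t : 𝕜) (n : ℕ) :
    ∑' k, binomialTransformTerm a t (k, n) = binomialTransform a n * t ^ n := by
  rw [tsum_eq_sum (s := range (n + 1))
      fun k hk => binomialTransformTerm_of_lt a t (by simpa [Nat.lt_succ_iff] using hk),
    binomialTransform, sum_mul]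
  refine sum_congr rfl fun k hk => ?_
  rw [binomialTransformTerm, if_pos (Nat.lt_succ_iff.mp (mem_range.mp hk))]

lemma hasSum_binomialTransformTerm_column (a : ℕ → 𝕜) {t : 𝕜} (ht : ‖t‖ < 1) (k : ℕ) :
    HasSum (fun n => binomialTransformTerm a t (k, n)) ((1 - t)⁻¹ * (a k * (t / (1 - t)) ^ k)) := by
  have h1t : 1 - t ≠ 0 := sub_ne_zero.mpr fun h => by simp [← h] at ht
  rw [← hasSum_nat_add_iff' k,
    sum_eq_zero fun n hn => binomialTransformTerm_of_lt a t (mem_range.mp hn), sub_zero]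
  have hvalue : (1 - t)⁻¹ * (a k * (t / (1 - t)) ^ k) = a k * t ^ k * (1 / (1 - t) ^ (k + 1)) := by
    rw [div_pow, pow_succ]
    field_simp
  rw [hvalue]
  refine ((hasSum_choose_mul_geometric_of_norm_lt_one k ht).mul_left _).congr_fun fun n => ?_
  rw [binomialTransformTerm, if_pos (Nat.le_add_left k n), pow_add]
  ring

lemma binomialTransformTerm_norm_nonneg (a : ℕ → 𝕜) (t : 𝕜) (p : ℕ × ℕ) :
    0 ≤ binomialTransformTerm (‖a ·‖) ‖t‖ p := by
  unfold binomialTransformTerm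
  split_ifs <;> positivity

lemma summable_binomialTransformTerm_norm (a : ℕ → 𝕜) {t : 𝕜} (ht : ‖t‖ < 1)
    (ha : Summable fun k => ‖a k‖ * (‖t‖ / (1 - ‖t‖)) ^ k) :
    Summable (binomialTransformTerm (‖a ·‖) ‖t‖) := by
  have ht' : ‖‖t‖‖ < 1 := by rwa [norm_norm]
  rw [summable_prod_of_nonneg (binomialTransformTerm_norm_nonneg a t)]
  refine ⟨fun k => (hasSum_binomialTransformTerm_column _ ht' k).summable, ?_⟩
  simpa only [(hasSum_binomialTransformTerm_column _ ht' _).tsum_eq] using ha.mul_left _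

theorem summable_norm_binomialTransform_mul_pow (a : ℕ → 𝕜) {t : 𝕜} (ht : ‖t‖ < 1)
    (ha : Summable fun k => ‖a k‖ * (‖t‖ / (1 - ‖t‖)) ^ k) :
    Summable fun n => ‖binomialTransform a n * t ^ n‖ := by
  have hrows := ((summable_prod_of_nonneg fun p => binomialTransformTerm_norm_nonneg a t p.swap).mp
    (summable_binomialTransformTerm_norm a ht ha).prod_symm).2
  simp only [Prod.swap_prod_mk, tsum_binomialTransformTerm_row] at hrows
  refine hrows.of_nonneg_of_le (fun n => norm_nonneg _) fun n => ?_
  rw [norm_mul, norm_pow]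
  gcongr
  exact norm_binomialTransform_le a n

theorem hasSum_binomialTransform_mul_pow [CompleteSpace 𝕜] (a : ℕ → 𝕜) {t : 𝕜} (ht : ‖t‖ < 1)
    (ha : Summable fun k => ‖a k‖ * (‖t‖ / (1 - ‖t‖)) ^ k) :
    HasSum (fun n => binomialTransform a n * t ^ n) ((1 - t)⁻¹ * ∑' k, a k * (t / (1 - t)) ^ k) := by
  have hf : Summable (binomialTransformTerm a t) :=
    (summable_binomialTransformTerm_norm a ht ha).of_norm_bounded
      (norm_binomialTransformTerm_le a t)
  refine (summable_norm_binomialTransform_mul_pow a ht ha).of_norm.hasSum_iff.mpr ?_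
  calc ∑' n, binomialTransform a n * t ^ n
      = ∑' n, ∑' k, binomialTransformTerm a t (k, n) := by
        simp only [tsum_binomialTransformTerm_row]
    _ = ∑' k, ∑' n, binomialTransformTerm a t (k, n) :=
        Summable.tsum_comm (f := fun k n => binomialTransformTerm a t (k, n)) hf
    _ = (1 - t)⁻¹ * ∑' k, a k * (t / (1 - t)) ^ k := by
        simp only [(hasSum_binomialTransformTerm_column a ht _).tsum_eq, tsum_mul_left]

end BinomialTransform

lemma laguerre_eq_binomialTransform (n : ℕ) (x : ℝ) :
    laguerre n x = binomialTransform (fun k => (-x) ^ k / k.factorial) n := by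
  refine sum_congr rfl fun k _ => ?_
  rw [neg_pow]
  ring

/-- Generating function of the Laguerre polynomials:
for `|t| < 1`, `∑ L_n(x) tⁿ = (1-t)⁻¹ e^{-xt/(1-t)}`, with absolute convergence. -/
theorem laguerre_generating_function (x t : ℝ) (ht : |t| < 1) :
    Summable (fun n : ℕ => |laguerre n x * t ^ n|) ∧
      ∑' n : ℕ, laguerre n x * t ^ n = (1 - t)⁻¹ * Real.exp (-x * t / (1 - t)) := by
  rw [← Real.norm_eq_abs] at ht
  have ha : Summable fun k => ‖(-x) ^ k / k.factorial‖ * (‖t‖ / (1 - ‖t‖)) ^ k := by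
    simpa only [norm_div, norm_pow, norm_neg, RCLike.norm_natCast, div_mul_eq_mul_div, ← mul_pow]
      using Real.summable_pow_div_factorial (‖x‖ * (‖t‖ / (1 - ‖t‖)))
  have hexp : ∑' k, (-x) ^ k / k.factorial * (t / (1 - t)) ^ k = Real.exp (-x * t / (1 - t)) := by
    rw [Real.exp_eq_exp_ℝ, ← (NormedSpace.expSeries_div_hasSum_exp _).tsum_eq, mul_div_assoc]
    simp only [div_mul_eq_mul_div, ← mul_pow]
  simp only [laguerre_eq_binomialTransform, ← Real.norm_eq_abs]
  exact ⟨summable_norm_binomialTransform_mul_pow _ ht ha,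
    hexp ▸ (hasSum_binomialTransform_mul_pow _ ht ha).tsum_eq⟩
end

section
/- For every real x and every real t with |t| < 1, the generating function identity for the generalized Laguerre polynomials of parameter λ = −1 holds: ∑_{n=0}^{∞} L_n^{(−1)}(x) t^n = e^{−x t/(1−t)}, where the series converges absolutely. -/
/-!
Expand `exp (x t / (1 - t)) = ∑ₘ xᵐ / m! · (t / (1 - t))ᵐ` and each power by the negative binomial
series `(t / (1 - t))ᵐ = ∑ⱼ C(m + j - 1, j) tᵐ⁺ʲ`. For `|t| < 1` the resulting double series converges
absolutely (its absolute values form the same double series for `exp (|x| |t| / (1 - |t|))`), so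
it may be summed along the antidiagonals `m + j = n`; with `x` replaced by `-x`, the `n`-th
antidiagonal sum is exactly `L_n^{(-1)}(x) tⁿ`.
-/

open Real Finset

/-- The generalized Laguerre polynomial of parameter `λ = -1`:
`L_0^{(-1)}(x) = 1` and, for `n ≥ 1`,
`L_n^{(-1)}(x) = ∑_{k=0}^n (-1)^k (n-1 choose n-k) x^k / k!`. -/
noncomputable def laguerreM1 : ℕ → ℝ → ℝ
  | 0, _ => 1
  | n + 1, x => ∑ k ∈ Finset.range (n + 2),
      (-1) ^ k * (n.choose (n + 1 - k) : ℝ) * x ^ k / (Nat.factorial k : ℝ)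

section Antidiagonal

variable {A E : Type*} [AddMonoid A] [HasAntidiagonal A] [SeminormedAddCommGroup E]
  {f : A × A → E}

theorem hasSum_sum_antidiagonal_of_summable_norm [CompleteSpace E]
    (hf : Summable fun p => ‖f p‖) :
    HasSum (fun n => ∑ p ∈ antidiagonal n, f p) (∑' p, f p) := by
  let e := HasAntidiagonal.sigmaAntidiagonalEquivProd (A := A)
  refine (e.hasSum_iff.mpr hf.of_norm.hasSum).sigma fun n => ?_
  rw [← sum_coe_sort]
  exact hasSum_fintype _

theorem summable_norm_sum_antidiagonal_of_summable_norm (hf : Summable fun p => ‖f p‖) :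
    Summable fun n => ‖∑ p ∈ antidiagonal n, f p‖ :=
  (hasSum_sum_antidiagonal_of_summable_norm (f := fun p => ‖f p‖) (by simpa using hf)).summable
    |>.of_nonneg_of_le (fun _ => norm_nonneg _) fun _ => norm_sum_le _ _

end Antidiagonal

/-- For `m = 0` the truncated subtraction gives `C(j - 1, j) = 0` for `j ≠ 0`, so the series is
`1 = (t / (1 - t)) ^ 0`. -/
theorem hasSum_choose_pred_mul_pow {𝕜 : Type*} [NormedField 𝕜] [CompleteSpace 𝕜] {t : 𝕜}
    (ht : ‖t‖ < 1) (m : ℕ) :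
    HasSum (fun j => ((m + j - 1).choose j : 𝕜) * t ^ (m + j)) ((t / (1 - t)) ^ m) := by
  cases m with
  | zero =>
    rw [pow_zero]
    convert hasSum_ite_eq (0 : ℕ) (1 : 𝕜) using 2 with j
    rcases j with _ | j <;> simp
  | succ k =>
    have hterm : (fun j => ((k + 1 + j - 1).choose j : 𝕜) * t ^ (k + 1 + j)) =
        fun j => t ^ (k + 1) * (((j + k).choose k : 𝕜) * t ^ j) := by
      funext j
      rw [show k + 1 + j - 1 = j + k by omega, Nat.choose_symm_add, pow_add]
      ring
    rw [hterm, div_pow, div_eq_mul_one_div (t ^ (k + 1))]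
    exact (hasSum_choose_mul_geometric_of_norm_lt_one k ht).mul_left _

noncomputable def laguerreM1DoubleTerm (x t : ℝ) (p : ℕ × ℕ) : ℝ :=
  x ^ p.1 / (p.1.factorial : ℝ) * (((p.1 + p.2 - 1).choose p.2 : ℝ) * t ^ (p.1 + p.2))

section DoubleTerm

variable {t : ℝ}

theorem hasSum_laguerreM1DoubleTerm_row (x : ℝ) (ht : |t| < 1) (m : ℕ) :
    HasSum (fun j => laguerreM1DoubleTerm x t (m, j)) ((x * (t / (1 - t))) ^ m / m.factorial) := by
  rw [mul_pow, mul_div_right_comm]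
  exact (hasSum_choose_pred_mul_pow (t := t) (by simpa using ht) m).mul_left _

theorem abs_laguerreM1DoubleTerm (x t : ℝ) (p : ℕ × ℕ) :
    |laguerreM1DoubleTerm x t p| = laguerreM1DoubleTerm |x| |t| p := by
  simp [laguerreM1DoubleTerm, abs_mul, abs_div, abs_pow]

theorem summable_norm_laguerreM1DoubleTerm (x : ℝ) (ht : |t| < 1) :
    Summable fun p => ‖laguerreM1DoubleTerm x t p‖ := by
  simp_rw [Real.norm_eq_abs, abs_laguerreM1DoubleTerm]
  have hrow := hasSum_laguerreM1DoubleTerm_row |x| (t := |t|) (by rwa [abs_abs])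
  refine (summable_prod_of_nonneg fun p => ?_).mpr ⟨fun m => (hrow m).summable, ?_⟩
  · unfold laguerreM1DoubleTerm
    positivity
  · simpa only [(hrow _).tsum_eq] using Real.summable_pow_div_factorial _

theorem hasSum_laguerreM1DoubleTerm (x : ℝ) (ht : |t| < 1) :
    HasSum (laguerreM1DoubleTerm x t) (exp (x * t / (1 - t))) := by
  have hsum := (summable_norm_laguerreM1DoubleTerm x ht).of_norm
  have hexp : HasSum (fun m : ℕ => (x * (t / (1 - t))) ^ m / m.factorial)
      (exp (x * t / (1 - t))) := by
    rw [Real.exp_eq_exp_ℝ, ← mul_div_assoc]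
    exact NormedSpace.expSeries_div_hasSum_exp _
  rw [hexp.unique (hsum.hasSum.prod_fiberwise (hasSum_laguerreM1DoubleTerm_row x ht))]
  exact hsum.hasSum

end DoubleTerm

theorem sum_antidiagonal_laguerreM1DoubleTerm (x t : ℝ) (n : ℕ) :
    ∑ p ∈ antidiagonal n, laguerreM1DoubleTerm (-x) t p = laguerreM1 n x * t ^ n := by
  rw [Nat.sum_antidiagonal_eq_sum_range_succ_mk]
  cases n with
  | zero => simp [laguerreM1DoubleTerm, laguerreM1]
  | succ n =>
    rw [laguerreM1, sum_mul]
    refine sum_congr rfl fun k hk => ?_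
    have hk : k + (n + 1 - k) = n + 1 := by rw [mem_range] at hk; omega
    unfold laguerreM1DoubleTerm
    dsimp only
    rw [hk, Nat.add_sub_cancel, neg_pow]
    ring

/-- Generating function of the generalized Laguerre polynomials with parameter `-1`:
for `|t| < 1`, `∑ L_n^{(-1)}(x) tⁿ = e^{-xt/(1-t)}`, with absolute convergence. -/
theorem laguerreM1_generating_function (x t : ℝ) (ht : |t| < 1) :
    Summable (fun n : ℕ => |laguerreM1 n x * t ^ n|) ∧
      ∑' n : ℕ, laguerreM1 n x * t ^ n = Real.exp (-x * t / (1 - t)) := by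
  have hF := summable_norm_laguerreM1DoubleTerm (-x) ht
  constructor
  · simpa only [Real.norm_eq_abs, sum_antidiagonal_laguerreM1DoubleTerm] using
      summable_norm_sum_antidiagonal_of_summable_norm hF
  · simp_rw [← sum_antidiagonal_laguerreM1DoubleTerm x t]
    rw [(hasSum_sum_antidiagonal_of_summable_norm hF).tsum_eq,
      (hasSum_laguerreM1DoubleTerm (-x) ht).tsum_eq]
end

section
/- Let β > 0, let P be a natural number, and define the amplification factor φ_P(z) = ∑_{p=0}^{P} L_p^{(−1)}(β²) · (z/(z−β²))^p. Then the limit of φ_P(z) as real z → −∞ exists and equals L_P(β²), the Laguerre polynomial of degree P evaluated at β². -/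
/-!
Pascal's rule turns `∑_{p ≤ P} L_p^{(-1)}` into a telescoping sum equal to `L_P`, so `φ_P` is a
polynomial in `d̂(z) = z / (z - β²)` whose value at `1` is `L_P(β²)`; and `d̂(z) → 1` as `z → -∞`.
-/

open Real Finset Filter

theorem Nat.choose_succ_eq_choose_add_choose_sub {n k : ℕ} (hk : k ≤ n + 1) :
    (n + 1).choose k = n.choose k + n.choose (n + 1 - k) := by
  rcases k with _ | k
  · simp
  · rw [Nat.choose_succ_succ', add_comm,
      Nat.choose_symm_of_eq_add (by omega : n = k + (n + 1 - (k + 1)))]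

theorem laguerre_succ (n : ℕ) (x : ℝ) :
    laguerre (n + 1) x = laguerre n x + laguerreM1 (n + 1) x := by
  have hlast : laguerre n x = ∑ k ∈ range (n + 2),
      (-1) ^ k * (n.choose k : ℝ) * x ^ k / (k.factorial : ℝ) := by
    simp [laguerre, Finset.sum_range_succ _ (n + 1)]
  rw [hlast, laguerreM1, laguerre, ← sum_add_distrib]
  refine sum_congr rfl fun k hk => ?_
  rw [Nat.choose_succ_eq_choose_add_choose_sub (by simpa [Nat.lt_succ_iff] using hk)]
  push_cast
  ring

theorem sum_range_laguerreM1 (P : ℕ) (x : ℝ) :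
    ∑ p ∈ range (P + 1), laguerreM1 p x = laguerre P x := by
  induction P with
  | zero => simp [laguerre, laguerreM1]
  | succ n ih => rw [sum_range_succ, ih, laguerre_succ]

theorem tendsto_div_sub_const_atBot (c : ℝ) :
    Tendsto (fun z : ℝ => z / (z - c)) atBot (nhds 1) := by
  have hden : Tendsto (fun z : ℝ => z - c) atBot atBot :=
    tendsto_atBot_add_const_right _ _ tendsto_id
  have hsum : Tendsto (fun z : ℝ => 1 + c / (z - c)) atBot (nhds 1) := by
    simpa using tendsto_const_nhds.add (tendsto_const_nhds.div_atBot hden)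
  refine hsum.congr' ?_
  filter_upwards [eventually_lt_atBot c] with z hz
  field_simp [(sub_neg.mpr hz).ne]
  ring

theorem amplification_factor_limit_general (β : ℝ) (P : ℕ) :
    Filter.Tendsto
      (fun z : ℝ => ∑ p ∈ Finset.range (P + 1),
        laguerreM1 p (β ^ 2) * (z / (z - β ^ 2)) ^ p)
      Filter.atBot (nhds (laguerre P (β ^ 2))) := by
  have hpoly : Continuous fun w : ℝ => ∑ p ∈ range (P + 1), laguerreM1 p (β ^ 2) * w ^ p := by
    fun_prop
  simpa [Function.comp_def, sum_range_laguerreM1] using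
    (hpoly.tendsto 1).comp (tendsto_div_sub_const_atBot (β ^ 2))

/-- The limiting value of the amplification factor
`φ_P(z) = ∑_{p=0}^P L_p^{(-1)}(β²) (z/(z-β²))^p` as real `z → -∞` is `L_P(β²)`. -/
theorem amplification_factor_limit (β : ℝ) (hβ : 0 < β) (P : ℕ) :
    Filter.Tendsto
      (fun z : ℝ => ∑ p ∈ Finset.range (P + 1),
        laguerreM1 p (β ^ 2) * (z / (z - β ^ 2)) ^ p)
      Filter.atBot (nhds (laguerre P (β ^ 2))) :=
  amplification_factor_limit_general β P
end

section
/- Let P ≥ 1 be a natural number and suppose β > 0 is chosen so that L_{P+1}^{(−1)}(β²) = 0 (equivalently, β² is a root of the derivative L_{P+1}' of the Laguerre polynomial of degree P+1). Then the order-P amplification factor φ_P(z) = ∑_{p=0}^{P} L_p^{(−1)}(β²) (z/(z−β²))^p achieves one extra order of accuracy: φ_P(z) − e^{z} = O(z^{P+2}) as z → 0. -/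
/-!
The coefficient `(p-1).choose (p-k)` of `(-x)^k/k!` in `L_p^{(-1)}(x)` counts the compositions
of `p` into `k` positive parts, whose generating function is `(t/(1-t))^k`. Summing over `k` gives
the generating function `∑ L_p^{(-1)}(x) t^p = exp (x t/(t-1))`. The substitution
`t = z/(z-β²)` inverts `t ↦ β² t/(t-1)`, so `φ_P(z)` is the degree-`P` Taylor polynomial in `t` of
a function equal to `e^z`; as the coefficient of `t^(P+1)` vanishes, the remainder is
`O(t^(P+2)) = O(z^(P+2))`.
-/

open Real Finset Filter Asymptotics

open FormalMultilinearSeries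

-- The number of compositions of `p` into `k` positive parts (`1` for `p = k = 0`).
def compositionCount (p k : ℕ) : ℕ := if k ≤ p then (p - 1).choose (p - k) else 0

lemma compositionCount_le_two_pow (p k : ℕ) : compositionCount p k ≤ 2 ^ p := by
  unfold compositionCount
  split_ifs
  · exact (Nat.choose_le_two_pow _ _).trans (Nat.pow_le_pow_right two_pos (p.sub_le 1))
  · exact Nat.zero_le _

lemma compositionCount_add_self (n k : ℕ) : compositionCount (n + k) k = (n + k - 1).choose n := by
  simp [compositionCount]

lemma hasSum_compositionCount_mul_pow (k : ℕ) {t : ℝ} (ht : ‖t‖ < 1) :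
    HasSum (fun p => (compositionCount p k : ℝ) * t ^ p) ((t / (1 - t)) ^ k) := by
  rcases k with _ | j
  · rw [pow_zero]
    convert hasSum_single (f := fun p => (compositionCount p 0 : ℝ) * t ^ p) 0 fun p hp => ?_
    · simp [compositionCount]
    · simp [compositionCount, Nat.choose_eq_zero_of_lt (Nat.sub_one_lt hp)]
  have hzero : ∀ p ∉ Set.range (· + (j + 1)), (compositionCount p (j + 1) : ℝ) * t ^ p = 0 := by
    intro p hp
    have : p < j + 1 := by
      by_contra h
      exact hp ⟨p - (j + 1), by simp only; omega⟩
    simp [compositionCount, Nat.not_le.2 this]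
  rw [← (add_left_injective (j + 1)).hasSum_iff hzero, div_pow, div_eq_mul_one_div]
  refine ((hasSum_choose_mul_geometric_of_norm_lt_one j ht).mul_left (t ^ (j + 1))).congr_fun
    fun n => ?_
  simp only [Function.comp_apply, compositionCount_add_self]
  rw [Nat.add_sub_assoc (Nat.le_add_left 1 j), Nat.add_sub_cancel, Nat.choose_symm_add, pow_add]
  ring

lemma laguerreM1_eq_sum_compositionCount (p : ℕ) (x : ℝ) :
    laguerreM1 p x = ∑ k ∈ range (p + 1), (compositionCount p k : ℝ) * (-x) ^ k / k.factorial := by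
  rcases p with _ | n
  · simp [laguerreM1, compositionCount]
  refine sum_congr rfl fun k hk => ?_
  rw [compositionCount, if_pos (Nat.lt_succ_iff.1 (mem_range.1 hk)), neg_pow, Nat.add_sub_cancel]
  ring

theorem hasSum_laguerreM1_mul_pow (x : ℝ) {t : ℝ} (ht : ‖t‖ < 1 / 2) :
    HasSum (fun p => laguerreM1 p x * t ^ p) (exp (x * t / (t - 1))) := by
  -- Fubini for this double series, absolutely convergent since `compositionCount p k ≤ 2 ^ p`.
  set A : ℕ × ℕ → ℝ := fun q => (-x) ^ q.1 / q.1.factorial * (compositionCount q.2 q.1 * t ^ q.2)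
  have hA : Summable A := by
    refine .of_norm_bounded ((Real.summable_pow_div_factorial ‖x‖).mul_of_nonneg
      (summable_geometric_of_lt_one (r := 2 * ‖t‖) (by positivity) (by linarith))
      (fun k => by positivity) (fun p => by positivity)) fun ⟨k, p⟩ => ?_
    rw [norm_mul, norm_div, norm_mul, norm_pow, norm_neg, mul_pow, RCLike.norm_natCast,
      RCLike.norm_natCast, norm_pow]
    gcongr
    exact_mod_cast compositionCount_le_two_pow p k
  have hfiber_k : ∀ k, HasSum (fun p => A (k, p)) ((-x * (t / (1 - t))) ^ k / k.factorial) :=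
    fun k => by
      rw [mul_pow, mul_div_right_comm]
      exact (hasSum_compositionCount_mul_pow k (by linarith)).mul_left _
  have hfiber_p : ∀ p, HasSum (fun k => A (k, p)) (laguerreM1 p x * t ^ p) := fun p => by
    rw [laguerreM1_eq_sum_compositionCount, sum_mul]
    convert hasSum_sum_of_ne_finset_zero (f := fun k => A (k, p)) (L := .unconditional ℕ)
      fun k hk => ?_ using 2 with k
    · ring
    · simp [A, compositionCount, Nat.not_le.2 (Nat.lt_succ_iff.1 (by simpa using hk))]
  have hexp : HasSum (fun k => (-x * (t / (1 - t))) ^ k / k.factorial) (exp (x * t / (t - 1))) := by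
    have : -x * (t / (1 - t)) = x * t / (t - 1) := by rw [← neg_sub t 1, div_neg]; ring
    rw [this, Real.exp_eq_exp_ℝ]
    exact NormedSpace.expSeries_div_hasSum_exp _
  have hsum := (hA.hasSum.prod_fiberwise hfiber_k).unique hexp
  rw [← hsum]
  exact ((Equiv.prodComm ℕ ℕ).hasSum_iff.2 hA.hasSum).prod_fiberwise hfiber_p

lemma hasFPowerSeriesOnBall_ofScalars_of_hasSum {c : ℕ → ℝ} {f : ℝ → ℝ} {r : NNReal} (hr : 0 < r)
    (hf : ∀ t : ℝ, ‖t‖ < r → HasSum (fun n => c n * t ^ n) (f t)) :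
    HasFPowerSeriesOnBall f (ofScalars ℝ c) 0 r where
  r_le := ENNReal.le_of_forall_nnreal_lt fun r' hr' =>
    (ofScalars ℝ c).le_radius_of_tendsto (l := 0) <| by
      simpa [ofScalars_norm] using (hf r' (by simpa using hr')).summable.tendsto_atTop_zero.norm
  r_pos := by exact_mod_cast hr
  hasSum := fun {y} hy => by
    simpa [ofScalars_apply_eq, mul_comm] using hf y (by simpa using hy)

lemma HasFPowerSeriesAt.isBigO_sub_sum_range_ofScalars {c : ℕ → ℝ} {f : ℝ → ℝ}
    (hf : HasFPowerSeriesAt f (ofScalars ℝ c) 0) (n : ℕ) :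
    (fun t => f t - ∑ p ∈ range n, c p * t ^ p) =O[nhds 0] fun t => t ^ n := by
  have h := hf.isBigO_sub_partialSum_pow n
  simp_rw [← norm_pow] at h
  simpa [partialSum, ofScalars_apply_eq, mul_comm] using isBigO_norm_right.1 h

theorem maximal_order_of_accuracy_general (P : ℕ) (β : ℝ) (hβ : 0 < β)
    (hroot : laguerreM1 (P + 1) (β ^ 2) = 0) :
    (fun z : ℝ => (∑ p ∈ Finset.range (P + 1),
        laguerreM1 p (β ^ 2) * (z / (z - β ^ 2)) ^ p) - Real.exp z)
      =O[nhds 0] fun z : ℝ => z ^ (P + 2) := by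
  set b := β ^ 2
  have hb : b ≠ 0 := by positivity
  have htaylor := HasFPowerSeriesAt.isBigO_sub_sum_range_ofScalars
    (hasFPowerSeriesOnBall_ofScalars_of_hasSum (r := 1 / 2) (by norm_num)
      fun t ht => hasSum_laguerreM1_mul_pow b (by simpa using ht)).hasFPowerSeriesAt (P + 2)
  simp only [sum_range_succ _ (P + 1), hroot, zero_mul, add_zero] at htaylor
  have hlin : (fun z : ℝ => z / (z - b)) =O[nhds 0] fun z => z := by
    have hinv : Tendsto (fun z : ℝ => (z - b)⁻¹) (nhds 0) (nhds (0 - b)⁻¹) :=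
      ((continuous_sub_right b).tendsto 0).inv₀ (by simpa using hb)
    simpa [div_eq_mul_inv] using (isBigO_refl (fun z : ℝ => z) _).mul (hinv.isBigO_one ℝ)
  have hsubst := hlin.trans_tendsto tendsto_id
  refine ((htaylor.comp_tendsto hsubst).trans (hlin.pow _)).neg_left.congr'
    ?_ EventuallyEq.rfl
  filter_upwards [eventually_ne_nhds hb.symm] with z hz
  have hinverse : b * (z / (z - b)) / (z / (z - b) - 1) = z := by
    rw [div_sub_one (sub_ne_zero.2 hz), sub_sub_cancel]
    field_simp
  simp [hinverse]

/-- If `L_{P+1}^{(-1)}(β²) = 0`, then the order-`P` amplification factor achieves one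
extra order of accuracy: `φ_P(z) - e^z = O(z^{P+2})` as `z → 0`. -/
theorem maximal_order_of_accuracy (P : ℕ) (hP : 1 ≤ P) (β : ℝ) (hβ : 0 < β)
    (hroot : laguerreM1 (P + 1) (β ^ 2) = 0) :
    (fun z : ℝ => (∑ p ∈ Finset.range (P + 1),
        laguerreM1 p (β ^ 2) * (z / (z - β ^ 2)) ^ p) - Real.exp z)
      =O[nhds 0] fun z : ℝ => z ^ (P + 2) :=
  maximal_order_of_accuracy_general P β hβ hroot
end
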